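/- Suppose H is homogeneous with branching numbers n_1, …, n_{d−1}, and suppose the noise values {L_h} are independent real-valued random variables with E[L_h] = 0 and Var(L_h) = 8/ε_{ℓ(h)}², where ε_1, …, ε_d > 0. Then for the singleton district D = {h} consisting of a single leaf h ∈ H_d, the error variance satisfies Var(E_h) = 8 / (ε_1² (n_1 n_2 ⋯ n_{d−1})²) + Σ_{ℓ=2}^{d} 8 n_{ℓ−1} (n_{ℓ−1} − 1) / (ε_ℓ² (n_{ℓ−1} n_ℓ ⋯ n_{d−1})²). -/

import Mathlib

open Finset MeasureTheory ProbabilityTheory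

structure Hierarchy where
  Node : Type
  fintypeNode : Fintype Node
  decEqNode : DecidableEq Node
  d : ℕ
  d_pos : 1 ≤ d
  root : Node
  level : Node → ℕ
  parent : Node → Node
  level_pos : ∀ h, 1 ≤ level h
  level_le : ∀ h, level h ≤ d
  level_root : level root = 1
  root_unique : ∀ h, level h = 1 → h = root
  parent_level : ∀ h, h ≠ root → level (parent h) + 1 = level h
  child_exists : ∀ h, level h < d → ∃ c, c ≠ root ∧ parent c = h

attribute [instance] Hierarchy.fintypeNode Hierarchy.decEqNode

namespace Hierarchy

variable (H : Hierarchy)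

def children (h : H.Node) : Finset H.Node :=
  Finset.univ.filter fun c => c ≠ H.root ∧ H.parent c = h

def levelSet (ℓ : ℕ) : Finset H.Node :=
  Finset.univ.filter fun h => H.level h = ℓ

def leaves : Finset H.Node := H.levelSet H.d

def Consistent (a : H.Node → ℝ) : Prop :=
  ∀ h, H.level h < H.d → a h = ∑ c ∈ H.children h, a c

def IsToyDown (a L α : H.Node → ℝ) : Prop :=
  α H.root = a H.root + L H.root ∧
  ∀ h, H.level h < H.d →
    (∑ c ∈ H.children h, α c) = α h ∧
    ∀ x : H.Node → ℝ, (∑ c ∈ H.children h, x c) = α h →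
      (∃ c ∈ H.children h, x c ≠ α c) →
      ∑ c ∈ H.children h, (α c - (a c + L c))^2 <
        ∑ c ∈ H.children h, (x c - (a c + L c))^2

def IsWeights (D : Finset H.Node) (w : H.Node → ℝ) : Prop :=
  (∀ h, H.level h = H.d → w h = if h ∈ D then 1 else 0) ∧
  (∀ h, H.level h < H.d → w h = (∑ c ∈ H.children h, w c) / ((H.children h).card : ℝ))

def frag (w : H.Node → ℝ) : ℝ :=
  ∑ h ∈ Finset.univ.filter (fun h => h ≠ H.root), (w h - w (H.parent h))^2

end Hierarchy

/-!
Along the path from the root to the leaf `b`, ToyDown's projection step gives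
`E_c = L_c + (E_p - ∑_{c' child of p} L_{c'}) / n(p)`, so unrolling the recursion writes `E_b` as
a fixed linear combination of the independent noises: the root noise enters with weight
`1 / (n_1 ⋯ n_{d-1})`, and at level `ℓ ≥ 2` the path node and each of its siblings enter with
weights `1 - 1/n_{ℓ-1}` and `-1/n_{ℓ-1}`, divided by `n_ℓ ⋯ n_{d-1}`. The variance is the sum of
squared weights times noise variances, and the squared level-`ℓ` weights sum to `1 - 1/n_{ℓ-1}`.
-/

namespace Finset

theorem eq_add_div_card_of_strictMinimizer {ι : Type*} (s : Finset ι) (y z : ι → ℝ)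
    (σ : ℝ) (hsum : ∑ i ∈ s, z i = σ)
    (hmin : ∀ x : ι → ℝ, ∑ i ∈ s, x i = σ → (∃ i ∈ s, x i ≠ z i) →
      ∑ i ∈ s, (z i - y i) ^ 2 < ∑ i ∈ s, (x i - y i) ^ 2)
    {i : ι} (hi : i ∈ s) : z i = y i + (σ - ∑ j ∈ s, y j) / #s := by
  set t := (σ - ∑ j ∈ s, y j) / #s
  have hcard : (#s : ℝ) ≠ 0 := by exact_mod_cast (card_pos.2 ⟨i, hi⟩).ne'
  have hshift : ∑ j ∈ s, (y j + t) = σ := by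
    rw [sum_add_distrib, sum_const, nsmul_eq_mul, mul_div_cancel₀ _ hcard]
    ring
  suffices ∀ j ∈ s, y j + t = z j from (this i hi).symm
  by_contra! ⟨j, hj, hne⟩
  -- Pythagoras: `z - (y + t)` sums to zero over `s`, so it is orthogonal to the constant `t`.
  have hpyth : ∑ k ∈ s, (z k - y k) ^ 2 = ∑ k ∈ s, (z k - (y k + t)) ^ 2 + #s * t ^ 2 := by
    have horth : ∑ k ∈ s, (z k - (y k + t)) = 0 := by
      rw [sum_sub_distrib, hsum, hshift, sub_self]
    have hexp : ∀ k ∈ s, (z k - y k) ^ 2 =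
        (z k - (y k + t)) ^ 2 + 2 * t * (z k - (y k + t)) + t ^ 2 :=
      fun k _ ↦ by ring
    rw [sum_congr rfl hexp, sum_add_distrib, sum_add_distrib, ← mul_sum, horth, sum_const,
      nsmul_eq_mul]
    ring
  have hlt := hmin (fun k ↦ y k + t) hshift ⟨j, hj, hne⟩
  simp only [add_sub_cancel_left, sum_const, nsmul_eq_mul] at hlt
  have : 0 ≤ ∑ k ∈ s, (z k - (y k + t)) ^ 2 := sum_nonneg fun _ _ ↦ sq_nonneg _
  linarith

end Finset

theorem eq_sum_div_prod_of_eq_add_div {E D N : ℕ → ℝ} {m : ℕ} (h1 : E 1 = D 1)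
    (hsucc : ∀ k, 1 ≤ k → k < m → E (k + 1) = D (k + 1) + E k / N k) :
    ∀ k, 1 ≤ k → k ≤ m → E k = ∑ ℓ ∈ Icc 1 k, D ℓ / ∏ j ∈ Icc ℓ (k - 1), N j := by
  intro k hk
  induction k, hk using Nat.le_induction with
  | base => intro _; simp [h1]
  | succ k hk ih =>
    intro hkm
    have hprod : ∀ ℓ ∈ Icc 1 k,
        ∏ j ∈ Icc ℓ k, N j = (∏ j ∈ Icc ℓ (k - 1), N j) * N k := by
      intro ℓ hℓ
      obtain ⟨k, rfl⟩ := Nat.exists_eq_add_of_le' hk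
      rw [mem_Icc] at hℓ
      simpa using prod_Icc_succ_top (by omega) N
    rw [hsucc k hk (by omega), ih (by omega), sum_Icc_succ_top (by omega), Nat.add_sub_cancel,
      Icc_eq_empty_of_lt k.lt_succ_self, prod_empty, div_one, add_comm, sum_div]
    congr 1
    exact sum_congr rfl fun ℓ hℓ ↦ by rw [hprod ℓ hℓ, div_div]

theorem ProbabilityTheory.iIndepFun.variance_sum_mul {ι Ω : Type*} {_ : MeasurableSpace Ω}
    {μ : Measure Ω} {X : ι → Ω → ℝ} (hind : iIndepFun X μ) (hX : ∀ i, MemLp (X i) 2 μ)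
    (s : Finset ι) (c : ι → ℝ) :
    variance (fun ω ↦ ∑ i ∈ s, c i * X i ω) μ = ∑ i ∈ s, c i ^ 2 * variance (X i) μ := by
  have hfun : (fun ω ↦ ∑ i ∈ s, c i * X i ω) = ∑ i ∈ s, fun ω ↦ c i * X i ω := by
    ext ω; simp
  rw [hfun, IndepFun.variance_sum (fun i _ ↦ (hX i).const_mul _) fun i _ j _ hij ↦
    (hind.indepFun hij).comp (measurable_const_mul _) (measurable_const_mul _)]
  exact sum_congr rfl fun i _ ↦ variance_const_mul _ _ _

namespace Hierarchy

variable {H : Hierarchy}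

theorem mem_children {p c : H.Node} : c ∈ H.children p ↔ c ≠ H.root ∧ H.parent c = p := by
  simp [children]

theorem level_of_mem_children {p c : H.Node} (hc : c ∈ H.children p) :
    H.level c = H.level p + 1 := by
  obtain ⟨hroot, rfl⟩ := mem_children.1 hc
  exact (H.parent_level c hroot).symm

theorem root_not_mem_children (p : H.Node) : H.root ∉ H.children p :=
  fun h ↦ (mem_children.1 h).1 rfl

theorem children_nonempty {p : H.Node} (hp : H.level p < H.d) : (H.children p).Nonempty :=
  let ⟨c, hc⟩ := H.child_exists p hp
  ⟨c, mem_children.2 hc⟩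

theorem mem_levelSet {ℓ : ℕ} {h : H.Node} : h ∈ H.levelSet ℓ ↔ H.level h = ℓ := by
  simp [levelSet]

theorem levelSet_one : H.levelSet 1 = {H.root} := by
  ext h
  rw [mem_levelSet, mem_singleton]
  exact ⟨H.root_unique h, fun h ↦ h ▸ H.level_root⟩

theorem sum_sum_levelSet {M : Type*} [AddCommMonoid M] (f : H.Node → M) :
    ∑ ℓ ∈ Icc 1 H.d, ∑ h ∈ H.levelSet ℓ, f h = ∑ h, f h :=
  sum_fiberwise_of_maps_to (fun h _ ↦ mem_Icc.2 ⟨H.level_pos h, H.level_le h⟩) f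

theorem level_parent_iterate {g : H.Node} {k : ℕ} (hk : k < H.level g) :
    H.level (H.parent^[k] g) = H.level g - k := by
  induction k with
  | zero => rfl
  | succ k ih =>
    have hlevel := ih (by omega)
    have hroot : H.parent^[k] g ≠ H.root := fun h ↦ by
      rw [h, H.level_root] at hlevel
      omega
    have := H.parent_level _ hroot
    rw [Function.iterate_succ_apply']
    omega

variable (H) in
-- Meaningful for `1 ≤ ℓ ≤ H.level g`; beyond that, truncated subtraction makes it `g` itself.
def ancestor (g : H.Node) (ℓ : ℕ) : H.Node := H.parent^[H.level g - ℓ] g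

theorem level_ancestor {g : H.Node} {ℓ : ℕ} (h1 : 1 ≤ ℓ) (hg : ℓ ≤ H.level g) :
    H.level (H.ancestor g ℓ) = ℓ := by
  rw [ancestor, level_parent_iterate (by omega)]
  omega

theorem ancestor_level_self (g : H.Node) : H.ancestor g (H.level g) = g := by
  simp [ancestor]

theorem ancestor_one (g : H.Node) : H.ancestor g 1 = H.root :=
  H.root_unique _ (level_ancestor le_rfl (H.level_pos g))

theorem ancestor_succ_mem_children {g : H.Node} {k : ℕ} (hk : 1 ≤ k) (hkg : k < H.level g) :
    H.ancestor g (k + 1) ∈ H.children (H.ancestor g k) := by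
  refine mem_children.2 ⟨fun h ↦ ?_, ?_⟩
  · have := level_ancestor (g := g) (ℓ := k + 1) (by omega) hkg
    rw [h, H.level_root] at this
    omega
  · rw [ancestor, ancestor, ← Function.iterate_succ_apply' H.parent]
    congr 2
    omega

theorem IsToyDown.eq_of_mem_children {a L α : H.Node → ℝ} (hα : H.IsToyDown a L α) {p c : H.Node}
    (hp : H.level p < H.d) (hc : c ∈ H.children p) :
    α c = a c + L c + (α p - ∑ c' ∈ H.children p, (a c' + L c')) / #(H.children p) :=
  let ⟨hsum, hmin⟩ := hα.2 p hp
  Finset.eq_add_div_card_of_strictMinimizer _ _ α _ hsum hmin hc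

theorem IsToyDown.error_of_mem_children {a L α : H.Node → ℝ} (hα : H.IsToyDown a L α)
    (hcons : H.Consistent a) {p c : H.Node} (hp : H.level p < H.d) (hc : c ∈ H.children p) :
    α c - a c = L c + (α p - a p - ∑ c' ∈ H.children p, L c') / #(H.children p) := by
  rw [hα.eq_of_mem_children hp hc, sum_add_distrib, ← hcons p hp]
  ring

variable (H) in
def pathDegree (g : H.Node) (j : ℕ) : ℝ := #(H.children (H.ancestor g j))

-- For `ℓ = 1` the ancestor at level `0` is junk, but the second term still vanishes on
-- `levelSet 1 = {root}` because the root is nobody's child.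
variable (H) in
noncomputable def levelWeight (g : H.Node) (ℓ : ℕ) (h : H.Node) : ℝ :=
  (if h = H.ancestor g ℓ then 1 else 0) -
    if h ∈ H.children (H.ancestor g (ℓ - 1)) then (H.pathDegree g (ℓ - 1))⁻¹ else 0

theorem pathDegree_ne_zero {g : H.Node} {j : ℕ} (hj : 1 ≤ j) (hjg : j < H.level g) :
    H.pathDegree g j ≠ 0 := by
  have hlevel := level_ancestor hj hjg.le
  have := H.level_le g
  exact Nat.cast_ne_zero.2 (children_nonempty (by omega)).card_pos.ne'

theorem levelWeight_one_root (g : H.Node) : H.levelWeight g 1 H.root = 1 := by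
  rw [levelWeight, if_pos (ancestor_one g).symm, if_neg (root_not_mem_children _), sub_zero]

theorem sum_levelSet_levelWeight_mul {g : H.Node} {ℓ : ℕ} (hℓ : 2 ≤ ℓ) (hℓg : ℓ ≤ H.level g)
    (f : H.Node → ℝ) :
    ∑ h ∈ H.levelSet ℓ, H.levelWeight g ℓ h * f h =
      f (H.ancestor g ℓ) -
        (∑ c ∈ H.children (H.ancestor g (ℓ - 1)), f c) / H.pathDegree g (ℓ - 1) := by
  obtain ⟨k, rfl⟩ : ∃ k, ℓ = k + 1 := ⟨ℓ - 1, by omega⟩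
  have hsub : H.children (H.ancestor g k) ⊆ H.levelSet (k + 1) := fun c hc ↦
    mem_levelSet.2 (by rw [level_of_mem_children hc, level_ancestor (by omega) (by omega)])
  have hmem : H.ancestor g (k + 1) ∈ H.levelSet (k + 1) :=
    mem_levelSet.2 (level_ancestor (by omega) hℓg)
  simp only [levelWeight, sub_mul, ite_mul, one_mul, zero_mul, sum_sub_distrib, sum_ite_eq',
    if_pos hmem, Nat.add_sub_cancel, sum_ite_mem, inter_eq_right.2 hsub, div_eq_inv_mul, mul_sum]

theorem sum_levelSet_levelWeight_sq {g : H.Node} {ℓ : ℕ} (hℓ : 2 ≤ ℓ) (hℓg : ℓ ≤ H.level g) :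
    ∑ h ∈ H.levelSet ℓ, H.levelWeight g ℓ h ^ 2 = 1 - (H.pathDegree g (ℓ - 1))⁻¹ := by
  have hN := pathDegree_ne_zero (g := g) (j := ℓ - 1) (by omega) (by omega)
  have hmem : H.ancestor g ℓ ∈ H.children (H.ancestor g (ℓ - 1)) := by
    simpa [Nat.sub_add_cancel (by omega : 1 ≤ ℓ)] using
      ancestor_succ_mem_children (g := g) (k := ℓ - 1) (by omega) (by omega)
  have hzero : ∑ c ∈ H.children (H.ancestor g (ℓ - 1)), H.levelWeight g ℓ c = 0 := by
    simp only [levelWeight, sum_sub_distrib, sum_ite_eq', if_pos hmem]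
    rw [sum_ite_of_true fun _ hc ↦ hc, sum_const, nsmul_eq_mul, ← pathDegree, mul_inv_cancel₀ hN,
      sub_self]
  simp only [sq]
  rw [sum_levelSet_levelWeight_mul hℓ hℓg, hzero, zero_div, sub_zero, levelWeight, if_pos rfl,
    if_pos hmem]

theorem IsToyDown.error_ancestor_succ {a L α : H.Node → ℝ} (hα : H.IsToyDown a L α)
    (hcons : H.Consistent a) {g : H.Node} {k : ℕ} (hk : 1 ≤ k) (hkg : k < H.level g) :
    α (H.ancestor g (k + 1)) - a (H.ancestor g (k + 1)) =
      ∑ h ∈ H.levelSet (k + 1), H.levelWeight g (k + 1) h * L h +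
        (α (H.ancestor g k) - a (H.ancestor g k)) / H.pathDegree g k := by
  have hk' : H.level (H.ancestor g k) < H.d :=
    (level_ancestor hk hkg.le).trans_lt (hkg.trans_le (H.level_le g))
  rw [sum_levelSet_levelWeight_mul (ℓ := k + 1) (by omega) hkg, Nat.add_sub_cancel,
    hα.error_of_mem_children hcons hk' (ancestor_succ_mem_children hk hkg), pathDegree]
  ring

theorem IsToyDown.error_eq_sum {a L α : H.Node → ℝ} (hα : H.IsToyDown a L α)
    (hcons : H.Consistent a) {b : H.Node} (hb : H.level b = H.d) :
    α b - a b = ∑ h, H.levelWeight b (H.level h) h /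
      (∏ j ∈ Icc (H.level h) (H.d - 1), H.pathDegree b j) * L h := by
  have hrec := eq_sum_div_prod_of_eq_add_div
    (E := fun k ↦ α (H.ancestor b k) - a (H.ancestor b k))
    (D := fun ℓ ↦ ∑ h ∈ H.levelSet ℓ, H.levelWeight b ℓ h * L h) (N := H.pathDegree b)
    (by simp only [ancestor_one, levelSet_one, sum_singleton, levelWeight_one_root, hα.1]; ring)
    (fun k hk hkb ↦ hα.error_ancestor_succ hcons hk hkb) (H.level b) (H.level_pos b) le_rfl
  rw [ancestor_level_self, hb] at hrec
  rw [hrec, ← sum_sum_levelSet]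
  refine sum_congr rfl fun ℓ _ ↦ ?_
  rw [sum_div]
  refine sum_congr rfl fun h hh ↦ ?_
  rw [mem_levelSet.1 hh, div_mul_eq_mul_div]

theorem variance_leaf_error {Ω : Type*} [MeasurableSpace Ω] {μ : Measure Ω}
    {a : H.Node → ℝ} {L α : H.Node → Ω → ℝ} (hcons : H.Consistent a)
    (hα : ∀ ω, H.IsToyDown a (fun h ↦ L h ω) (fun h ↦ α h ω))
    (hL2 : ∀ h, MemLp (L h) 2 μ) (hindep : iIndepFun L μ) {v : ℕ → ℝ}
    (hvar : ∀ h, variance (L h) μ = v (H.level h)) {b : H.Node} (hb : H.level b = H.d) :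
    variance (fun ω ↦ α b ω - a b) μ =
      v 1 / (∏ j ∈ Icc 1 (H.d - 1), H.pathDegree b j) ^ 2 +
        ∑ ℓ ∈ Icc 2 H.d, (1 - (H.pathDegree b (ℓ - 1))⁻¹) * v ℓ /
          (∏ j ∈ Icc ℓ (H.d - 1), H.pathDegree b j) ^ 2 := by
  simp_rw [(hα _).error_eq_sum hcons hb]
  rw [hindep.variance_sum_mul hL2, ← sum_sum_levelSet]
  have hlevel : ∀ ℓ, ∑ h ∈ H.levelSet ℓ, (H.levelWeight b (H.level h) h /
        (∏ j ∈ Icc (H.level h) (H.d - 1), H.pathDegree b j)) ^ 2 * variance (L h) μ =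
      (∑ h ∈ H.levelSet ℓ, H.levelWeight b ℓ h ^ 2) * v ℓ /
        (∏ j ∈ Icc ℓ (H.d - 1), H.pathDegree b j) ^ 2 := by
    intro ℓ
    rw [sum_mul, sum_div]
    refine sum_congr rfl fun h hh ↦ ?_
    rw [hvar, mem_levelSet.1 hh]
    ring
  rw [sum_congr rfl fun ℓ _ ↦ hlevel ℓ, ← insert_Icc_add_one_left_eq_Icc H.d_pos,
    sum_insert (by simp), levelSet_one, sum_singleton, levelWeight_one_root, one_pow, one_mul]
  congr 1
  refine sum_congr rfl fun ℓ hℓ ↦ ?_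
  rw [mem_Icc] at hℓ
  rw [sum_levelSet_levelWeight_sq hℓ.1 (hb ▸ hℓ.2)]

end Hierarchy

theorem toydown_block_error_variance_homogeneous_general (H : Hierarchy)
    (n : ℕ → ℕ)
    (hhom : ∀ h, H.level h < H.d → (H.children h).card = n (H.level h))
    {Ω : Type} [MeasurableSpace Ω] (μ : MeasureTheory.Measure Ω)
    (ε : ℕ → ℝ)
    (a : H.Node → ℝ) (hcons : H.Consistent a)
    (L : H.Node → Ω → ℝ)
    (hL2 : ∀ h, MeasureTheory.MemLp (L h) 2 μ)
    (hindep : iIndepFun L μ)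
    (hvar : ∀ h, variance (L h) μ = 8 / (ε (H.level h)) ^ 2)
    (α : H.Node → Ω → ℝ)
    (hα : ∀ ω, H.IsToyDown a (fun h => L h ω) (fun h => α h ω))
    (b : H.Node) (hb : H.level b = H.d) :
    variance (fun ω => α b ω - a b) μ =
      8 / ((ε 1) ^ 2 * (∏ j ∈ Finset.Icc 1 (H.d - 1), (n j : ℝ)) ^ 2) +
        ∑ ℓ ∈ Finset.Icc 2 H.d,
          8 * (n (ℓ - 1) : ℝ) * ((n (ℓ - 1) : ℝ) - 1) /
            ((ε ℓ) ^ 2 * (∏ j ∈ Finset.Icc (ℓ - 1) (H.d - 1), (n j : ℝ)) ^ 2) := by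
  have hdeg : ∀ j, 1 ≤ j → j < H.d → H.pathDegree b j = n j := fun j hj hjd ↦ by
    have hlevel := Hierarchy.level_ancestor hj (hb ▸ hjd.le)
    rw [Hierarchy.pathDegree, hhom _ (hlevel.symm ▸ hjd), hlevel]
  have hprod : ∀ ℓ, 1 ≤ ℓ →
      ∏ j ∈ Icc ℓ (H.d - 1), H.pathDegree b j = ∏ j ∈ Icc ℓ (H.d - 1), (n j : ℝ) :=
    fun ℓ hℓ ↦ prod_congr rfl fun j hj ↦ by
      rw [mem_Icc] at hj
      exact hdeg j (by omega) (by omega)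
  rw [Hierarchy.variance_leaf_error (v := fun ℓ ↦ 8 / ε ℓ ^ 2) hcons hα hL2 hindep hvar hb,
    hprod 1 le_rfl, div_div]
  congr 1
  refine sum_congr rfl fun ℓ hℓ ↦ ?_
  rw [mem_Icc] at hℓ
  have hn : (n (ℓ - 1) : ℝ) ≠ 0 := by
    rw [← hdeg (ℓ - 1) (by omega) (by omega)]
    exact Hierarchy.pathDegree_ne_zero (by omega) (by omega)
  rw [hprod ℓ (by omega), hdeg (ℓ - 1) (by omega) (by omega),
    ← insert_Icc_add_one_left_eq_Icc (show ℓ - 1 ≤ H.d - 1 by omega), prod_insert (by simp),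
    Nat.sub_add_cancel (by omega)]
  field_simp

/-- Error variance of a single leaf (block) in a homogeneous hierarchy with branching
numbers `n_1, …, n_{d−1}`. -/
theorem toydown_block_error_variance_homogeneous (H : Hierarchy)
    (n : ℕ → ℕ)
    (hhom : ∀ h, H.level h < H.d → (H.children h).card = n (H.level h))
    {Ω : Type} [MeasurableSpace Ω] (μ : MeasureTheory.Measure Ω)
    [MeasureTheory.IsProbabilityMeasure μ]
    (ε : ℕ → ℝ) (hε : ∀ ℓ, 1 ≤ ℓ → ℓ ≤ H.d → 0 < ε ℓ)
    (a : H.Node → ℝ) (hcons : H.Consistent a)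
    (L : H.Node → Ω → ℝ)
    (hmeas : ∀ h, Measurable (L h))
    (hL2 : ∀ h, MeasureTheory.MemLp (L h) 2 μ)
    (hindep : iIndepFun L μ)
    (hmean : ∀ h, ∫ ω, L h ω ∂μ = 0)
    (hvar : ∀ h, variance (L h) μ = 8 / (ε (H.level h)) ^ 2)
    (α : H.Node → Ω → ℝ)
    (hα : ∀ ω, H.IsToyDown a (fun h => L h ω) (fun h => α h ω))
    (b : H.Node) (hb : H.level b = H.d) :
    variance (fun ω => α b ω - a b) μ =
      8 / ((ε 1) ^ 2 * (∏ j ∈ Finset.Icc 1 (H.d - 1), (n j : ℝ)) ^ 2) +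
        ∑ ℓ ∈ Finset.Icc 2 H.d,
          8 * (n (ℓ - 1) : ℝ) * ((n (ℓ - 1) : ℝ) - 1) /
            ((ε ℓ) ^ 2 * (∏ j ∈ Finset.Icc (ℓ - 1) (H.d - 1), (n j : ℝ)) ^ 2) :=
  toydown_block_error_variance_homogeneous_general H n hhom μ ε a hcons L hL2 hindep hvar α hα b hb
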